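/- arXiv:2406.19514 — 6 statements merged into one kernel-verified Lean document; each statement's English description precedes it below -/
import Mathlib

section
/- If M ⊆ V × V is an arc-modification set such that (V, A Δ M) is transitive, then the set S of endpoints of arcs in M is a transitivity modulator for G = (V, A), i.e., G − S is transitive. Consequently, the minimum vertex-deletion distance to transitivity is at most twice the minimum arc-modification distance to transitivity: δ_vd ≤ 2·δ_am. -/
/-- The arc relation `A` is transitive when restricted to the vertex set `X`. -/
def TransOn {V : Type*} (A : V → V → Prop) (X : Set V) : Prop :=
  ∀ u ∈ X, ∀ v ∈ X, ∀ w ∈ X, A u v → A v w → A u w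

/-- The arc relation obtained from `A` by the symmetric difference with the
arc set `M`. -/
def XorRel {V : Type*} (A : V → V → Prop) (M : Set (V × V)) : V → V → Prop :=
  fun u v => Xor' (A u v) ((u, v) ∈ M)

/-! Modifying the arcs of `M` only changes arcs between endpoints of `M`, so outside those
endpoints `A` agrees with the transitive relation `A Δ M`. An arc has two endpoints, whence the
factor `2`; and the complete relation shows that some modification set exists. -/

section

variable {V : Type*}

def arcEndpoints (M : Set (V × V)) : Set V := {x | ∃ p ∈ M, p.1 = x ∨ p.2 = x}

theorem arcEndpoints_eq_image_fst_union_image_snd (M : Set (V × V)) :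
    arcEndpoints M = Prod.fst '' M ∪ Prod.snd '' M := by
  ext x
  simp only [arcEndpoints, Set.mem_setOf_eq, Set.mem_union, Set.mem_image]
  constructor
  · rintro ⟨p, hp, rfl | rfl⟩
    exacts [Or.inl ⟨p, hp, rfl⟩, Or.inr ⟨p, hp, rfl⟩]
  · rintro (⟨p, hp, rfl⟩ | ⟨p, hp, rfl⟩)
    exacts [⟨p, hp, Or.inl rfl⟩, ⟨p, hp, Or.inr rfl⟩]

theorem subset_arcEndpoints_prod_arcEndpoints (M : Set (V × V)) :
    M ⊆ arcEndpoints M ×ˢ arcEndpoints M :=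
  fun p hp => ⟨⟨p, hp, Or.inl rfl⟩, ⟨p, hp, Or.inr rfl⟩⟩

theorem ncard_arcEndpoints_le (M : Set (V × V)) : (arcEndpoints M).ncard ≤ 2 * M.ncard := by
  by_cases hM : M.Finite
  · calc (arcEndpoints M).ncard ≤ (Prod.fst '' M).ncard + (Prod.snd '' M).ncard := by
          rw [arcEndpoints_eq_image_fst_union_image_snd]; exact Set.ncard_union_le _ _
      _ ≤ M.ncard + M.ncard := add_le_add (Set.ncard_image_le hM) (Set.ncard_image_le hM)
      _ = 2 * M.ncard := (two_mul _).symm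
  · -- an infinite `M` has infinitely many endpoints, and `ncard` is `0` on both sides
    have hS : (arcEndpoints M).Infinite := fun hS =>
      hM ((hS.prod hS).subset (subset_arcEndpoints_prod_arcEndpoints M))
    simp [hS.ncard]

theorem XorRel.apply_iff_of_notMem {A : V → V → Prop} {M : Set (V × V)} {u v : V}
    (h : (u, v) ∉ M) : XorRel A M u v ↔ A u v :=
  ⟨fun huv => huv.elim And.left fun huv => absurd huv.1 h, fun huv => Or.inl ⟨huv, h⟩⟩

theorem transOn_compl_arcEndpoints {A : V → V → Prop} {M : Set (V × V)}
    (hM : Transitive (XorRel A M)) : TransOn A (arcEndpoints M)ᶜ := by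
  have agree {u v} (hu : u ∈ (arcEndpoints M)ᶜ) : XorRel A M u v ↔ A u v :=
    XorRel.apply_iff_of_notMem fun h => hu ⟨_, h, Or.inl rfl⟩
  intro u hu v hv w _ huv hvw
  exact (agree hu).1 (hM ((agree hu).2 huv) ((agree hv).2 hvw))

theorem XorRel.transitive_setOf_not (A : V → V → Prop) :
    Transitive (XorRel A {p | ¬ A p.1 p.2}) := by
  intro u v w _ _
  by_cases h : A u w
  exacts [Or.inl ⟨h, fun hn => hn h⟩, Or.inr ⟨h, h⟩]

end

theorem endpoints_modulator_and_dvd_le_two_dam_general {V : Type*}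
    (A : V → V → Prop) :
    (∀ M : Set (V × V), Transitive (XorRel A M) →
      TransOn A {x | ∃ p ∈ M, p.1 = x ∨ p.2 = x}ᶜ) ∧
    sInf {n : ℕ | ∃ S : Set V, S.ncard = n ∧ TransOn A Sᶜ} ≤
      2 * sInf {n : ℕ | ∃ M : Set (V × V), M.ncard = n ∧
        Transitive (XorRel A M)} := by
  refine ⟨fun M hM => transOn_compl_arcEndpoints hM, ?_⟩
  have hne : {n : ℕ | ∃ M : Set (V × V), M.ncard = n ∧ Transitive (XorRel A M)}.Nonempty :=
    ⟨_, _, rfl, XorRel.transitive_setOf_not A⟩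
  obtain ⟨M, hMcard, hM⟩ := Nat.sInf_mem hne
  calc sInf {n : ℕ | ∃ S : Set V, S.ncard = n ∧ TransOn A Sᶜ}
      ≤ (arcEndpoints M).ncard := Nat.sInf_le ⟨_, rfl, transOn_compl_arcEndpoints hM⟩
    _ ≤ 2 * M.ncard := ncard_arcEndpoints_le M
    _ = _ := by rw [hMcard]

/-- the endpoints of an arc-modification set towards transitivity
form a transitivity modulator; consequently δ_vd ≤ 2·δ_am. -/
theorem endpoints_modulator_and_dvd_le_two_dam {V : Type*} [Fintype V]
    (A : V → V → Prop) :
    (∀ M : Set (V × V), Transitive (XorRel A M) →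
      TransOn A {x | ∃ p ∈ M, p.1 = x ∨ p.2 = x}ᶜ) ∧
    sInf {n : ℕ | ∃ S : Set V, S.ncard = n ∧ TransOn A Sᶜ} ≤
      2 * sInf {n : ℕ | ∃ M : Set (V × V), M.ncard = n ∧
        Transitive (XorRel A M)} :=
  endpoints_modulator_and_dvd_le_two_dam_general A
end

section
/- Let G = (V, A) be a directed graph and S ⊆ V a transitivity modulator. Then G has a bidirectional clique of size at least k if and only if there exists a subset S' ⊆ S that is a bidirectional clique such that, letting V' be the vertices of V \ S bidirectionally connected to all of S', some strongly connected component of G[V'] together with S' has size at least k. -/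
/-- `S` is a bidirectional clique in the digraph with arc relation `A`. -/
def BiClique {V : Type*} (A : V → V → Prop) (S : Set V) : Prop :=
  ∀ u ∈ S, ∀ v ∈ S, u ≠ v → A u v ∧ A v u

/-- Reachability by directed paths staying inside `X`. -/
def ReachIn {V : Type*} (A : V → V → Prop) (X : Set V) : V → V → Prop :=
  Relation.TransGen (fun a b => A a b ∧ a ∈ X ∧ b ∈ X)

/-- `C` is a strongly connected component of the subgraph induced on `X`. -/
def IsSCCIn {V : Type*} (A : V → V → Prop) (X : Set V) (C : Set V) : Prop :=
  C ⊆ X ∧ (∀ u ∈ C, ∀ v ∈ C, u ≠ v → ReachIn A X u v) ∧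
    ∀ D, C ⊆ D → D ⊆ X →
      (∀ u ∈ D, ∀ v ∈ D, u ≠ v → ReachIn A X u v) → D = C

section

variable {V : Type*}

def StronglyConnectedIn (A : V → V → Prop) (X D : Set V) : Prop :=
  ∀ u ∈ D, ∀ v ∈ D, u ≠ v → ReachIn A X u v

variable {A : V → V → Prop}

theorem TransOn.mono {X Y : Set V} (hY : TransOn A Y) (hXY : X ⊆ Y) : TransOn A X :=
  fun u hu v hv w hw => hY u (hXY hu) v (hXY hv) w (hXY hw)

theorem TransOn.of_reachIn {X : Set V} (hX : TransOn A X) {u v : V} (h : ReachIn A X u v) :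
    A u v := by
  suffices A u v ∧ u ∈ X ∧ v ∈ X from this.1
  induction h with
  | single h => exact h
  | tail _ h ih => exact ⟨hX _ ih.2.1 _ ih.2.2 _ h.2.2 ih.1 h.1, ih.2.1, h.2.2⟩

theorem IsSCCIn.biClique {X C : Set V} (hX : TransOn A X) (hC : IsSCCIn A X C) :
    BiClique A C :=
  fun u hu v hv huv =>
    ⟨hX.of_reachIn (hC.2.1 u hu v hv huv), hX.of_reachIn (hC.2.1 v hv u hu huv.symm)⟩

theorem BiClique.mono {K L : Set V} (hK : BiClique A K) (hLK : L ⊆ K) : BiClique A L :=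
  fun u hu v hv huv => hK u (hLK hu) v (hLK hv) huv

theorem BiClique.union {C D : Set V} (hC : BiClique A C) (hD : BiClique A D)
    (hCD : ∀ c ∈ C, ∀ d ∈ D, A c d ∧ A d c) : BiClique A (C ∪ D) := by
  rintro u (hu | hu) v (hv | hv) huv
  · exact hC u hu v hv huv
  · exact hCD u hu v hv
  · exact (hCD v hv u hu).symm
  · exact hD u hu v hv huv

theorem BiClique.stronglyConnectedIn {K X : Set V} (hK : BiClique A K) (hKX : K ⊆ X) :
    StronglyConnectedIn A X K :=
  fun u hu v hv huv => .single ⟨(hK u hu v hv huv).1, hKX hu, hKX hv⟩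

theorem exists_isSCCIn_superset [Finite V] {X D : Set V} (hDX : D ⊆ X)
    (hD : StronglyConnectedIn A X D) : ∃ C, D ⊆ C ∧ IsSCCIn A X C := by
  obtain ⟨C, hDC, hC⟩ := (Set.toFinite {E | E ⊆ X ∧ StronglyConnectedIn A X E}).exists_le_maximal
    (a := D) ⟨hDX, hD⟩
  exact ⟨C, hDC, hC.1.1, hC.1.2, fun E hCE hEX hE => (hC.2 ⟨hEX, hE⟩ hCE).antisymm hCE⟩

end

/-- with a transitivity modulator `S`, `G` has a bidirectional
clique of size ≥ k iff some bidirectional clique `S' ⊆ S` can be extended by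
an scc of the graph induced on the vertices outside `S` bidirectionally
connected to all of `S'`, reaching total size ≥ k. -/
theorem biClique_iff_modulator_extension {V : Type*} [Fintype V]
    (A : V → V → Prop) (S : Set V) (hS : TransOn A Sᶜ) (k : ℕ) :
    (∃ K : Set V, BiClique A K ∧ k ≤ K.ncard) ↔
      ∃ S' ⊆ S, BiClique A S' ∧
        ∃ C : Set V,
          IsSCCIn A {v | v ∉ S ∧ ∀ s ∈ S', A v s ∧ A s v} C ∧
          k ≤ (C ∪ S').ncard := by
  constructor
  · rintro ⟨K, hK, hk⟩
    have hKX : K \ S ⊆ {v | v ∉ S ∧ ∀ s ∈ K ∩ S, A v s ∧ A s v} := fun v hv =>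
      ⟨hv.2, fun s hs => hK v hv.1 s hs.1 fun h => hv.2 (h ▸ hs.2)⟩
    obtain ⟨C, hKC, hC⟩ :=
      exists_isSCCIn_superset hKX ((hK.mono Set.sdiff_subset).stronglyConnectedIn hKX)
    have hK_sub : K ⊆ C ∪ K ∩ S := fun v hv => by
      by_cases h : v ∈ S
      exacts [Or.inr ⟨hv, h⟩, Or.inl (hKC ⟨hv, h⟩)]
    exact ⟨K ∩ S, Set.inter_subset_right, hK.mono Set.inter_subset_left, C, hC,
      hk.trans (Set.ncard_le_ncard hK_sub)⟩
  · rintro ⟨S', -, hS', C, hC, hk⟩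
    have hCS' : ∀ c ∈ C, ∀ s ∈ S', A c s ∧ A s c := fun c hc => (hC.1 hc).2
    exact ⟨C ∪ S', (hC.biClique (hS.mono fun v hv => hv.1)).union hS' hCS', hk⟩
end

section
/- Let G = (V, A) be a directed graph with an inherent transitivity modulator B (there exists M ⊆ B × B such that (V, A Δ M) is transitive). Let W = V \ B. If two vertices u, v ∈ W are joined by arcs in both directions in G, then they are real twins in the associated symmetric graph Ĝ, i.e., N_Ĝ[u] = N_Ĝ[v], where Ĝ is the undirected graph with edge {x,y} iff both (x,y) and (y,x) are arcs of G. -/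
/-- Adjacency in the undirected graph `Ĝ` associated with the digraph `A`:
an edge `{x, y}` whenever both arcs are present. -/
def HatAdj {V : Type*} (A : V → V → Prop) (x y : V) : Prop :=
  x ≠ y ∧ A x y ∧ A y x

/-!
Modifications inside `B × B` leave every arc with an endpoint outside `B` untouched, so on
such arcs the transitive relation `A Δ M` coincides with `A`. If `u, v ∉ B` are joined both
ways and `w` is a `Ĝ`-neighbour of `u`, then the paths `v → u → w` and `w → u → v` consist of
such arcs, and transitivity yields `v → w` and `w → v`; by symmetry `N[u] = N[v]`.
-/

section

variable {V : Type*} {A : V → V → Prop} {B : Set V} {M : Set (V × V)}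

theorem xorRel_iff_of_notMem (hM : M ⊆ B ×ˢ B) {x y : V} (hxy : x ∉ B ∨ y ∉ B) :
    XorRel A M x y ↔ A x y := by
  have hxyM : (x, y) ∉ M := fun h => hxy.elim (· (hM h).1) (· (hM h).2)
  exact ⟨fun h => (Xor.or h).resolve_right hxyM, fun h => Or.inl ⟨h, hxyM⟩⟩

theorem closedNeighborhood_subset_of_bidirectional (hM : M ⊆ B ×ˢ B)
    (hT : Transitive (XorRel A M)) {u v : V} (hu : u ∉ B) (hv : v ∉ B) (huv : A u v)
    (hvu : A v u) :
    {w : V | w = u ∨ HatAdj A u w} ⊆ {w : V | w = v ∨ HatAdj A v w} := by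
  intro w hw
  by_cases hw_eq : w = v
  · exact Or.inl hw_eq
  refine Or.inr ⟨Ne.symm hw_eq, ?_⟩
  rcases hw with rfl | ⟨-, huw, hwu⟩
  · exact ⟨hvu, huv⟩
  have hvw : A v w := (xorRel_iff_of_notMem hM (.inl hv)).mp <|
    hT ((xorRel_iff_of_notMem hM (.inl hv)).mpr hvu) ((xorRel_iff_of_notMem hM (.inl hu)).mpr huw)
  have hwv : A w v := (xorRel_iff_of_notMem hM (.inr hv)).mp <|
    hT ((xorRel_iff_of_notMem hM (.inr hu)).mpr hwu) ((xorRel_iff_of_notMem hM (.inl hu)).mpr huv)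
  exact ⟨hvw, hwv⟩

end

/-- with an inherent transitivity modulator `B` (witnessed by
`M ⊆ B × B` with `A Δ M` transitive), two white vertices joined by arcs in
both directions are real twins in `Ĝ`. -/
theorem white_bidirectional_real_twins {V : Type*} (A : V → V → Prop)
    (B : Set V) (M : Set (V × V)) (hM : M ⊆ B ×ˢ B)
    (hT : Transitive (XorRel A M)) (u v : V) (hu : u ∉ B) (hv : v ∉ B)
    (huv : A u v ∧ A v u) :
    {w : V | w = u ∨ HatAdj A u w} = {w : V | w = v ∨ HatAdj A v w} :=
  (closedNeighborhood_subset_of_bidirectional hM hT hu hv huv.1 huv.2).antisymm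
    (closedNeighborhood_subset_of_bidirectional hM hT hv hu huv.2 huv.1)
end

section
/- Let G = (V, A) be a directed graph with inherent transitivity modulator B and W = V \ B, and let Ĝ be the undirected graph with edge {u,v} iff both arcs (u,v),(v,u) exist in G. Then no vertex of B is adjacent in Ĝ to white vertices of two distinct connected components of Ĝ[W]. -/
/-!
Since `M ⊆ B × B`, editing by `M` leaves every arc with a white endpoint unchanged. Hence for
white Ĝ-neighbours `u`, `v` of `b`, transitivity of the edited digraph along `u → b → v` and
`v → b → u` yields both arcs between `u` and `v` in `A` itself: the white neighbours of `b` are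
pairwise adjacent in `Ĝ[W]`.
-/

section XorRel

variable {V : Type*} {A : V → V → Prop} {B : Set V} {M : Set (V × V)}

theorem xorRel_iff_of_notMem_s9 {u v : V} (h : (u, v) ∉ M) : XorRel A M u v ↔ A u v :=
  ⟨(·.elim And.left fun hM => (h hM.1).elim), fun huv => .inl ⟨huv, h⟩⟩

theorem xorRel_iff_of_left_notMem (hM : M ⊆ B ×ˢ B) {u v : V} (hu : u ∉ B) :
    XorRel A M u v ↔ A u v :=
  xorRel_iff_of_notMem_s9 fun h => hu (hM h).1

theorem xorRel_iff_of_right_notMem (hM : M ⊆ B ×ˢ B) {u v : V} (hv : v ∉ B) :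
    XorRel A M u v ↔ A u v :=
  xorRel_iff_of_notMem_s9 fun h => hv (hM h).2

theorem arc_trans_of_notMem (hM : M ⊆ B ×ˢ B) (hT : Transitive (XorRel A M)) {u b v : V}
    (hu : u ∉ B) (hv : v ∉ B) (hub : A u b) (hbv : A b v) : A u v :=
  (xorRel_iff_of_left_notMem hM hu).1 <|
    hT ((xorRel_iff_of_left_notMem hM hu).2 hub) ((xorRel_iff_of_right_notMem hM hv).2 hbv)

theorem hatAdj_of_hatAdj_of_hatAdj (hM : M ⊆ B ×ˢ B) (hT : Transitive (XorRel A M))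
    {b u v : V} (hu : u ∉ B) (hv : v ∉ B) (huv : u ≠ v) (hbu : HatAdj A b u)
    (hbv : HatAdj A b v) : HatAdj A u v :=
  ⟨huv, arc_trans_of_notMem hM hT hu hv hbu.2.2 hbv.2.1,
    arc_trans_of_notMem hM hT hv hu hbv.2.2 hbu.2.1⟩

end XorRel

theorem blue_neighbors_in_one_white_cluster_general {V : Type*} (A : V → V → Prop)
    (B : Set V) (M : Set (V × V)) (hM : M ⊆ B ×ˢ B)
    (hT : Transitive (XorRel A M)) (b : V) (u v : V)
    (hu : u ∉ B) (hv : v ∉ B) (hbu : HatAdj A b u) (hbv : HatAdj A b v) :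
    Relation.ReflTransGen (fun a c => a ∉ B ∧ c ∉ B ∧ HatAdj A a c) u v := by
  rcases eq_or_ne u v with rfl | huv
  · exact .refl
  · exact .single ⟨hu, hv, hatAdj_of_hatAdj_of_hatAdj hM hT hu hv huv hbu hbv⟩

/-- with an inherent transitivity modulator `B`, no blue vertex
is adjacent in `Ĝ` to white vertices of two distinct connected components of
`Ĝ[W]` (i.e. its white neighbours are all connected within `Ĝ[W]`). -/
theorem blue_neighbors_in_one_white_cluster {V : Type*} (A : V → V → Prop)
    (B : Set V) (M : Set (V × V)) (hM : M ⊆ B ×ˢ B)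
    (hT : Transitive (XorRel A M)) (b : V) (hb : b ∈ B) (u v : V)
    (hu : u ∉ B) (hv : v ∉ B) (hbu : HatAdj A b u) (hbv : HatAdj A b v) :
    Relation.ReflTransGen (fun a c => a ∉ B ∧ c ∉ B ∧ HatAdj A a c) u v :=
  blue_neighbors_in_one_white_cluster_general A B M hM hT b u v hu hv hbu hbv
end

section
/- Let G = (V, A) be a directed graph such that adding a set M of arcs (with M ∩ A = ∅ and all endpoints of M in B ⊆ V) makes (V, A ∪ M) transitive, and let Ĝ be the undirected graph with edge {u,v} iff both (u,v),(v,u) ∈ A. Then every white vertex u ∈ V \ B is adjacent in Ĝ to every other vertex of its connected component in Ĝ. -/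
/-! In `A ∪ M` a path of mutual arcs yields mutual arcs between its ends by transitivity, and an
arc of `M` has both ends blue, so the arcs at a white end already lie in `A`. -/

theorem Relation.transGen_le_mutual_of_transitive {α : Type*} {r s : α → α → Prop}
    (hr : Transitive r) (hs : ∀ x y, s x y → r x y ∧ r y x) :
    ∀ x y, Relation.TransGen s x y → r x y ∧ r y x :=
  have : IsTrans α fun x y => r x y ∧ r y x :=
    ⟨fun _ _ _ hxy hyz => ⟨hr hxy.1 hyz.1, hr hyz.2 hxy.2⟩⟩
  Relation.transGen_minimal hs

section WhiteVertex

variable {V : Type*} {A : V → V → Prop} {B : Set V} {M : Set (V × V)} {u v : V}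

theorem arc_from_white_of_arc_or_mem (hMB : M ⊆ B ×ˢ B) (hu : u ∉ B)
    (h : A u v ∨ (u, v) ∈ M) : A u v :=
  h.resolve_right fun huv => hu (hMB huv).1

theorem arc_to_white_of_arc_or_mem (hMB : M ⊆ B ×ˢ B) (hu : u ∉ B)
    (h : A v u ∨ (v, u) ∈ M) : A v u :=
  h.resolve_right fun hvu => hu (hMB hvu).2

end WhiteVertex

theorem white_adjacent_to_component_general {V : Type*} (A : V → V → Prop)
    (B : Set V) (M : Set (V × V)) (hMB : M ⊆ B ×ˢ B)
    (hT : Transitive (fun x y : V => A x y ∨ (x, y) ∈ M))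
    (u v : V) (hu : u ∉ B) (huv : u ≠ v)
    (hconn : Relation.ReflTransGen (HatAdj A) u v) :
    A u v ∧ A v u := by
  obtain rfl | hpath := Relation.reflTransGen_iff_eq_or_transGen.1 hconn
  · exact absurd rfl huv
  obtain ⟨hfrom, hto⟩ := Relation.transGen_le_mutual_of_transitive hT
    (fun _ _ hxy => ⟨Or.inl hxy.2.1, Or.inl hxy.2.2⟩) u v hpath
  exact ⟨arc_from_white_of_arc_or_mem hMB hu hfrom, arc_to_white_of_arc_or_mem hMB hu hto⟩

/-- if adding a set `M ⊆ B × B` of missing arcs makes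
`(V, A ∪ M)` transitive, then every white vertex `u ∉ B` is adjacent in `Ĝ`
to every other vertex of its connected component in `Ĝ`. -/
theorem white_adjacent_to_component {V : Type*} (A : V → V → Prop)
    (B : Set V) (M : Set (V × V)) (hMB : M ⊆ B ×ˢ B)
    (hMA : ∀ p ∈ M, ¬ A p.1 p.2)
    (hT : Transitive (fun x y : V => A x y ∨ (x, y) ∈ M))
    (u v : V) (hu : u ∉ B) (huv : u ≠ v)
    (hconn : Relation.ReflTransGen (HatAdj A) u v) :
    A u v ∧ A v u :=
  white_adjacent_to_component_general A B M hMB hT u v hu huv hconn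
end

section
/- Let G be an undirected graph whose vertex set is partitioned into blue vertices B and white vertices W, such that every two adjacent white vertices are real twins, no two white vertices in different components of G[W] are adjacent in G, and each component of G[W] is a clique (white cluster). If k > |B| + 1, then G has a clique of size k if and only if the graph G' obtained by deleting one arbitrary vertex from each white cluster has a clique of size k − 1. -/
/-!
A clique contains at most one deleted vertex: two deleted vertices in a clique would be adjacent,
hence in the same white cluster, which contains only one deleted vertex. Removing it, and
further vertices as needed, from a `k`-clique leaves a `(k - 1)`-clique avoiding the deleted set.
Conversely, a `(k - 1)`-clique has more than `|B|` vertices, so it contains a white vertex `w`;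
the deleted vertex of the cluster of `w` is a real twin of `w`, hence adjacent to every other
vertex of the clique, and adding it gives a `k`-clique.
-/

/-- Connectivity within the white vertices (vertices outside `B`) of the
graph `G`: a walk staying among white vertices. -/
def WhiteConn {V : Type*} (G : SimpleGraph V) (B : Finset V) : V → V → Prop :=
  Relation.ReflTransGen (fun a b => a ∉ B ∧ b ∉ B ∧ G.Adj a b)

namespace SimpleGraph

variable {V : Type*} {G : SimpleGraph V}

theorem IsNClique.insert_of_twin [DecidableEq V] {n : ℕ} {s : Finset V} {w d : V}
    (hs : G.IsNClique n s) (hw : w ∈ s) (hd : d ∉ s)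
    (htwin : ∀ x, (x = w ∨ G.Adj w x) ↔ (x = d ∨ G.Adj d x)) :
    G.IsNClique (n + 1) (insert d s) := by
  refine hs.insert fun b hb => ?_
  have hwb : b = w ∨ G.Adj w b := by
    by_cases hbw : b = w
    · exact .inl hbw
    · exact .inr (hs.1 hw hb (Ne.symm hbw))
  exact ((htwin b).mp hwb).resolve_left fun hbd => hd (hbd ▸ hb)

theorem IsNClique.exists_isNClique_pred_disjoint [DecidableEq V] {k : ℕ} {s D : Finset V}
    (hs : G.IsNClique k s) (hsD : (s ∩ D).card ≤ 1) :
    ∃ t : Finset V, G.IsNClique (k - 1) t ∧ Disjoint t D := by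
  have hcard : k - 1 ≤ (s \ D).card := by
    have hsplit := Finset.card_sdiff_add_card_inter s D
    rw [hs.2] at hsplit
    omega
  obtain ⟨t, hts, htcard⟩ := Finset.exists_subset_card_eq hcard
  exact ⟨t, ⟨hs.1.subset (hts.trans Finset.sdiff_subset), htcard⟩,
    Finset.disjoint_of_subset_left hts Finset.sdiff_disjoint⟩

end SimpleGraph

section WhiteClusters

variable {V : Type*} {G : SimpleGraph V} {B D : Finset V}

theorem eq_of_whiteConn_of_existsUnique
    (hD : ∀ w : V, w ∉ B → ∃! d : V, d ∈ D ∧ WhiteConn G B w d)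
    {d d' : V} (hd : d ∈ D) (hdB : d ∉ B) (hd' : d' ∈ D) (h : WhiteConn G B d d') : d = d' :=
  (hD d hdB).unique ⟨hd, .refl⟩ ⟨hd', h⟩

theorem SimpleGraph.IsClique.card_inter_le_one_of_whiteConn [DecidableEq V] {s : Finset V}
    (hs : G.IsClique (s : Set V)) (hDW : ∀ d ∈ D, d ∉ B)
    (hD : ∀ d ∈ D, ∀ d' ∈ D, WhiteConn G B d d' → d = d') :
    (s ∩ D).card ≤ 1 := by
  refine Finset.card_le_one.mpr fun d hd d' hd' => ?_
  rw [Finset.mem_inter] at hd hd'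
  by_contra hne
  exact hne <| hD d hd.2 d' hd'.2 <|
    .single ⟨hDW d hd.2, hDW d' hd'.2, hs hd.1 hd'.1 hne⟩

end WhiteClusters

theorem rr3_safe_general {V : Type*}
    (G : SimpleGraph V) (B : Finset V) (k : ℕ)
    (htwin : ∀ u v : V, u ∉ B → v ∉ B → G.Adj u v →
      ∀ x : V, (x = u ∨ G.Adj u x) ↔ (x = v ∨ G.Adj v x))
    (hcluster : ∀ u v : V, u ∉ B → v ∉ B → u ≠ v →
      WhiteConn G B u v → G.Adj u v)
    (D : Finset V) (hDW : ∀ d ∈ D, d ∉ B)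
    (hD : ∀ w : V, w ∉ B → ∃! d : V, d ∈ D ∧ WhiteConn G B w d)
    (hk : B.card + 1 < k) :
    (∃ s : Finset V, G.IsNClique k s) ↔
      ∃ s : Finset V, G.IsNClique (k - 1) s ∧ Disjoint s D := by
  classical
  constructor
  · rintro ⟨s, hs⟩
    exact hs.exists_isNClique_pred_disjoint <| hs.1.card_inter_le_one_of_whiteConn hDW
      fun d hd d' hd' => eq_of_whiteConn_of_existsUnique hD hd (hDW d hd) hd'
  · rintro ⟨s, hs, hsD⟩
    obtain ⟨w, hws, hwB⟩ := Finset.exists_mem_notMem_of_card_lt_card (s := B) (t := s)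
      (by rw [hs.2]; omega)
    obtain ⟨d, ⟨hdD, hwd⟩, -⟩ := hD w hwB
    have hds : d ∉ s := fun h => Finset.disjoint_left.mp hsD h hdD
    have hadj : G.Adj w d := hcluster w d hwB (hDW d hdD) (ne_of_mem_of_not_mem hws hds) hwd
    refine ⟨insert d s, ?_⟩
    rw [← Nat.sub_add_cancel (by omega : 1 ≤ k)]
    exact hs.insert_of_twin hws hds (htwin w d hwB (hDW d hdD) hadj)

/-- with blue vertices `B` and white vertices `V \ B`, where
adjacent white vertices are real twins, white vertices of distinct white
clusters are non-adjacent, and each white cluster is a clique, if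
`k > |B| + 1` then `G` has a clique of size `k` iff, after deleting one
vertex from each white cluster (a set `D` hitting each cluster exactly once),
there is a clique of size `k - 1` avoiding `D`. -/
theorem rr3_safe {V : Type*} [Fintype V] [DecidableEq V]
    (G : SimpleGraph V) (B : Finset V) (k : ℕ)
    (htwin : ∀ u v : V, u ∉ B → v ∉ B → G.Adj u v →
      ∀ x : V, (x = u ∨ G.Adj u x) ↔ (x = v ∨ G.Adj v x))
    (hcluster : ∀ u v : V, u ∉ B → v ∉ B → u ≠ v →
      WhiteConn G B u v → G.Adj u v)
    (hnonadj : ∀ u v : V, u ∉ B → v ∉ B → ¬ WhiteConn G B u v → ¬ G.Adj u v)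
    (D : Finset V) (hDW : ∀ d ∈ D, d ∉ B)
    (hD : ∀ w : V, w ∉ B → ∃! d : V, d ∈ D ∧ WhiteConn G B w d)
    (hk : B.card + 1 < k) :
    (∃ s : Finset V, G.IsNClique k s) ↔
      ∃ s : Finset V, G.IsNClique (k - 1) s ∧ Disjoint s D :=
  rr3_safe_general G B k htwin hcluster D hDW hD hk
end
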